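/- arXiv:1610.01051 — 2 statements merged into one kernel-verified Lean document; each statement's English description precedes it below -/
import Mathlib

section
/- Let A = U - V be a proper splitting of A ∈ ℝ^{m×n}. If λ is an eigenvalue of A†V, then μ = λ/(1+λ) is an eigenvalue of U†V; conversely, if μ is an eigenvalue of U†V, then λ = μ/(1-μ) is an eigenvalue of A†V. -/
open Matrix Polynomial

/-- `X` is the Moore-Penrose inverse of `A`. -/
def IsMP {m n : ℕ} (A : Matrix (Fin m) (Fin n) ℝ) (X : Matrix (Fin n) (Fin m) ℝ) : Prop :=
  A * X * A = A ∧ X * A * X = X ∧ (A * X)ᵀ = A * X ∧ (X * A)ᵀ = X * A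

/-- `A = U - V` is a proper splitting: `R(U)=R(A)` and `N(U)=N(A)`. -/
def ProperSplitting {m n : ℕ} (A U V : Matrix (Fin m) (Fin n) ℝ) : Prop :=
  A = U - V ∧ LinearMap.range U.mulVecLin = LinearMap.range A.mulVecLin ∧
    LinearMap.ker U.mulVecLin = LinearMap.ker A.mulVecLin

/-- `μ : ℂ` is an eigenvalue of the real matrix `M`. -/
def IsEigen {n : ℕ} (M : Matrix (Fin n) (Fin n) ℝ) (μ : ℂ) : Prop :=
  ((M.map (algebraMap ℝ ℂ)).charpoly).IsRoot μ

/-- The spectral radius of a real square matrix. -/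
noncomputable def specRad {n : ℕ} (M : Matrix (Fin n) (Fin n) ℝ) : ℝ :=
  sSup {r : ℝ | ∃ μ : ℂ, IsEigen M μ ∧ r = ‖μ‖}

/-- Entrywise nonnegativity. -/
def EntryNonneg {m n : ℕ} (A : Matrix (Fin m) (Fin n) ℝ) : Prop := ∀ i j, 0 ≤ A i j

/-- Entrywise order. -/
def EntryLE {m n : ℕ} (A B : Matrix (Fin m) (Fin n) ℝ) : Prop := ∀ i j, A i j ≤ B i j

/-- Entrywise strict order. -/
def EntryLT {m n : ℕ} (A B : Matrix (Fin m) (Fin n) ℝ) : Prop := ∀ i j, A i j < B i j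

/-!
For a proper splitting the orthogonal projectors `A A†`, `A† A` coincide with `U U†`, `U† U`:
symmetric `P`, `Q` with `P Q = Q` and `Q P = P` are equal, since transposing gives `P Q = P`.
With `V = U - A` this gives `A† V U† = A† - U† = U† V A†`, so `M = A† V` and `N = U† V` satisfy
`M N = M - N = N M`. Hence an eigenvector of `M` for `λ` is one of `N` for `λ / (1 + λ)`, and an
eigenvector of `N` for `μ` is one of `M` for `μ / (1 - μ)`; the values `λ = -1` and `μ = 1` are
impossible since they would force the eigenvector to vanish.
-/

namespace Matrix

variable {R : Type*} [CommRing R] {m n k : Type*} [Fintype m] [Fintype n]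

lemma mul_mul_eq_of_range_le [Fintype k] [DecidableEq k] {A : Matrix m n R} {X : Matrix n m R}
    {U : Matrix m k R} (hA : A * X * A = A)
    (h : LinearMap.range U.mulVecLin ≤ LinearMap.range A.mulVecLin) :
    A * X * U = U := by
  refine ext_of_mulVec_single fun i => ?_
  obtain ⟨y, hy⟩ := h ⟨Pi.single i 1, rfl⟩
  simp only [mulVecLin_apply] at hy
  rw [← mulVec_mulVec, ← hy, mulVec_mulVec, hA]

lemma mul_mul_eq_of_ker_le [DecidableEq n] {A : Matrix k n R} {U : Matrix m n R}
    {Y : Matrix n m R} (hU : U * Y * U = U)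
    (h : LinearMap.ker U.mulVecLin ≤ LinearMap.ker A.mulVecLin) :
    A * (Y * U) = A := by
  refine ext_of_mulVec_single fun i => ?_
  have hU_kills : U *ᵥ (Pi.single i 1 - (Y * U) *ᵥ Pi.single i 1) = 0 := by
    rw [mulVec_sub, mulVec_mulVec, ← Matrix.mul_assoc, hU, sub_self]
  have hA_kills := h hU_kills
  rw [LinearMap.mem_ker, mulVecLin_apply, mulVec_sub, sub_eq_zero, mulVec_mulVec] at hA_kills
  exact hA_kills.symm

lemma IsSymm.eq_of_mul_eq_right {P Q : Matrix n n R} (hP : P.IsSymm) (hQ : Q.IsSymm)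
    (hPQ : P * Q = Q) (hQP : Q * P = P) : P = Q := by
  simpa only [transpose_mul, hP.eq, hQ.eq, hPQ, eq_comm] using congr_arg (·ᵀ) hQP

lemma IsSymm.eq_of_mul_eq_left {P Q : Matrix n n R} (hP : P.IsSymm) (hQ : Q.IsSymm)
    (hPQ : P * Q = P) (hQP : Q * P = Q) : P = Q := by
  simpa only [transpose_mul, hP.eq, hQ.eq, hQP, eq_comm] using congr_arg (·ᵀ) hPQ

end Matrix

namespace Module.End

variable {K V : Type*} [Field K] [AddCommGroup V] [Module K V] {f g : End K V}

lemma HasEigenvector.of_mul_eq_sub_left (h : g * f = f - g) {a : K} {x : V}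
    (hx : f.HasEigenvector a x) : g.HasEigenvector (a / (1 + a)) x := by
  have hfx : f x = a • x := hx.apply_eq_smul
  have hgx : (1 + a) • g x = a • x := by
    have := congr($h x)
    rw [mul_apply, LinearMap.sub_apply, hfx, map_smul] at this
    rw [add_smul, one_smul, this, add_sub_cancel]
  have ha : 1 + a ≠ 0 := by
    intro ha
    rw [ha, zero_smul, eq_comm, smul_eq_zero] at hgx
    exact hgx.elim (fun h0 => by simp [h0] at ha) hx.2
  refine ⟨mem_eigenspace_iff.mpr ?_, hx.2⟩
  rw [div_eq_inv_mul, mul_smul, ← hgx, inv_smul_smul₀ ha]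

lemma HasEigenvector.of_mul_eq_sub_right (h : f * g = f - g) {a : K} {x : V}
    (hx : g.HasEigenvector a x) : f.HasEigenvector (a / (1 - a)) x := by
  have hgx : g x = a • x := hx.apply_eq_smul
  have hfx : (1 - a) • f x = a • x := by
    have := congr($h x)
    rw [mul_apply, LinearMap.sub_apply, hgx, map_smul] at this
    rw [sub_smul, one_smul, this, sub_sub_cancel]
  have ha : 1 - a ≠ 0 := by
    intro ha
    rw [ha, zero_smul, eq_comm, smul_eq_zero] at hfx
    exact hfx.elim (fun h0 => by simp [h0] at ha) hx.2
  refine ⟨mem_eigenspace_iff.mpr ?_, hx.2⟩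
  rw [div_eq_inv_mul, mul_smul, ← hfx, inv_smul_smul₀ ha]

end Module.End

namespace Matrix

variable {K ι : Type*} [Field K] [Fintype ι] [DecidableEq ι] {M N : Matrix ι ι K}

lemma isRoot_charpoly_iff_hasEigenvalue {a : K} :
    M.charpoly.IsRoot a ↔ Module.End.HasEigenvalue (toLin' M) a := by
  rw [← charpoly_toLin', Module.End.hasEigenvalue_iff_isRoot_charpoly]

lemma isRoot_charpoly_div_one_add (h : N * M = M - N) {a : K} (ha : M.charpoly.IsRoot a) :
    N.charpoly.IsRoot (a / (1 + a)) := by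
  obtain ⟨x, hx⟩ := (isRoot_charpoly_iff_hasEigenvalue.mp ha).exists_hasEigenvector
  have hN : toLin' N * toLin' M = toLin' M - toLin' N := by
    rw [Module.End.mul_eq_comp, ← toLin'_mul, h, map_sub]
  exact isRoot_charpoly_iff_hasEigenvalue.mpr
    (Module.End.hasEigenvalue_of_hasEigenvector (hx.of_mul_eq_sub_left hN))

lemma isRoot_charpoly_div_one_sub (h : M * N = M - N) {a : K} (ha : N.charpoly.IsRoot a) :
    M.charpoly.IsRoot (a / (1 - a)) := by
  obtain ⟨x, hx⟩ := (isRoot_charpoly_iff_hasEigenvalue.mp ha).exists_hasEigenvector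
  have hM : toLin' M * toLin' N = toLin' M - toLin' N := by
    rw [Module.End.mul_eq_comp, ← toLin'_mul, h, map_sub]
  exact isRoot_charpoly_iff_hasEigenvalue.mpr
    (Module.End.hasEigenvalue_of_hasEigenvector (hx.of_mul_eq_sub_right hM))

end Matrix

section ProperSplitting

variable {m n : ℕ} {A U V : Matrix (Fin m) (Fin n) ℝ} {Ad Ud : Matrix (Fin n) (Fin m) ℝ}

lemma IsMP.mul_eq_of_range_eq (hA : IsMP A Ad) (hU : IsMP U Ud)
    (h : LinearMap.range U.mulVecLin = LinearMap.range A.mulVecLin) : A * Ad = U * Ud := by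
  refine IsSymm.eq_of_mul_eq_right hA.2.2.1 hU.2.2.1 ?_ ?_
  · rw [← Matrix.mul_assoc, mul_mul_eq_of_range_le hA.1 h.le]
  · rw [← Matrix.mul_assoc, mul_mul_eq_of_range_le hU.1 h.ge]

lemma IsMP.mul_eq_of_ker_eq (hA : IsMP A Ad) (hU : IsMP U Ud)
    (h : LinearMap.ker U.mulVecLin = LinearMap.ker A.mulVecLin) : Ad * A = Ud * U := by
  refine IsSymm.eq_of_mul_eq_left hA.2.2.2 hU.2.2.2 ?_ ?_
  · rw [Matrix.mul_assoc, mul_mul_eq_of_ker_le hU.1 h.le]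
  · rw [Matrix.mul_assoc, mul_mul_eq_of_ker_le hA.1 h.ge]

lemma ProperSplitting.mul_mul_eq_sub (hps : ProperSplitting A U V) (hA : IsMP A Ad)
    (hU : IsMP U Ud) : Ad * V * Ud = Ad - Ud ∧ Ud * V * Ad = Ad - Ud := by
  obtain ⟨hAUV, hrange, hker⟩ := hps
  have hV : V = U - A := by rw [hAUV, sub_sub_cancel]
  have hP := hA.mul_eq_of_range_eq hU hrange
  have hQ := hA.mul_eq_of_ker_eq hU hker
  constructor
  · rw [hV, Matrix.mul_sub, Matrix.sub_mul, Matrix.mul_assoc Ad U, ← hP, ← Matrix.mul_assoc,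
      hA.2.1, hQ, hU.2.1]
  · rw [hV, Matrix.mul_sub, Matrix.sub_mul, ← hQ, hA.2.1, Matrix.mul_assoc Ud A, hP,
      ← Matrix.mul_assoc, hU.2.1]

end ProperSplitting

lemma IsEigen.div_one_add {n : ℕ} {M N : Matrix (Fin n) (Fin n) ℝ} (h : N * M = M - N) {a : ℂ}
    (ha : IsEigen M a) : IsEigen N (a / (1 + a)) :=
  isRoot_charpoly_div_one_add (by rw [← Matrix.map_mul, h, Matrix.map_sub _ (map_sub _)]) ha

lemma IsEigen.div_one_sub {n : ℕ} {M N : Matrix (Fin n) (Fin n) ℝ} (h : M * N = M - N) {a : ℂ}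
    (ha : IsEigen N a) : IsEigen M (a / (1 - a)) :=
  isRoot_charpoly_div_one_sub (by rw [← Matrix.map_mul, h, Matrix.map_sub _ (map_sub _)]) ha

theorem stmt2 {m n : ℕ} (A U V : Matrix (Fin m) (Fin n) ℝ)
    (Ad : Matrix (Fin n) (Fin m) ℝ) (Ud : Matrix (Fin n) (Fin m) ℝ)
    (hps : ProperSplitting A U V) (hA : IsMP A Ad) (hU : IsMP U Ud) :
    (∀ lam : ℂ, IsEigen (Ad * V) lam → IsEigen (Ud * V) (lam / (1 + lam))) ∧
    (∀ mu : ℂ, IsEigen (Ud * V) mu → IsEigen (Ad * V) (mu / (1 - mu))) := by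
  obtain ⟨hAVU, hUVA⟩ := hps.mul_mul_eq_sub hA hU
  have hMN : Ad * V * (Ud * V) = Ad * V - Ud * V := by
    rw [← Matrix.mul_assoc, hAVU, Matrix.sub_mul]
  have hNM : Ud * V * (Ad * V) = Ad * V - Ud * V := by
    rw [← Matrix.mul_assoc, hUVA, Matrix.sub_mul]
  exact ⟨fun _ => IsEigen.div_one_add hNM, fun _ => IsEigen.div_one_sub hMN⟩
end

section
/- Let (U_k, V_k, E_k), k = 1,…,p, be a proper weak regular multisplitting of a semimonotone matrix A ∈ ℝ^{m×n}. Then ρ(H) < 1, where H = Σ_{k=1}^p E_k U_k† V_k. -/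
open Matrix Polynomial

/-!
A proper splitting preserves range and kernel, so the Moore–Penrose projections satisfy
`U_k U_k† = A A†` and `U_k† U_k = A† A`; hence `U_k† V_k A† = A† - U_k†`, and with
`G = Σ E_k U_k†` the iteration matrix satisfies `H A† = A† - G`. Telescoping gives
`Σ_{j<N} H^j G + H^N A† = A†`, so by nonnegativity the series `Σ H^j G` is bounded by `A†`,
its terms `H^N E_k U_k†` tend to zero, and so does `H^(N+1) = Σ_k H^N E_k U_k† V_k`.
A matrix whose powers tend to zero has all its eigenvalues in the open unit disc.
-/

open Filter Topology

section EntryNonneg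

variable {l m n : ℕ}

lemma EntryNonneg.mul {A : Matrix (Fin l) (Fin m) ℝ} {B : Matrix (Fin m) (Fin n) ℝ}
    (hA : EntryNonneg A) (hB : EntryNonneg B) : EntryNonneg (A * B) := fun i j => by
  rw [Matrix.mul_apply]
  exact Finset.sum_nonneg fun k _ => mul_nonneg (hA i k) (hB k j)

lemma EntryNonneg.sum {ι : Type*} {s : Finset ι} {A : ι → Matrix (Fin m) (Fin n) ℝ}
    (hA : ∀ k ∈ s, EntryNonneg (A k)) : EntryNonneg (∑ k ∈ s, A k) := fun i j => by
  rw [Matrix.sum_apply]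
  exact Finset.sum_nonneg fun k hk => hA k hk i j

lemma EntryNonneg.pow {A : Matrix (Fin n) (Fin n) ℝ} (hA : EntryNonneg A) :
    ∀ N : ℕ, EntryNonneg (A ^ N)
  | 0 => fun i j => by rw [pow_zero, Matrix.one_apply]; split_ifs <;> norm_num
  | N + 1 => by rw [pow_succ]; exact (hA.pow N).mul hA

end EntryNonneg

lemma Matrix.eq_of_isSymm_of_mul_eq_right {ι R : Type*} [Fintype ι] [CommSemiring R]
    {P Q : Matrix ι ι R} (hP : P.IsSymm) (hQ : Q.IsSymm) (hPQ : P * Q = Q) (hQP : Q * P = P) :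
    P = Q :=
  calc P = Q * P := hQP.symm
    _ = (P * Q)ᵀ := by rw [transpose_mul, hP.eq, hQ.eq]
    _ = Q := by rw [hPQ, hQ.eq]

lemma Matrix.eq_of_isSymm_of_mul_eq_left {ι R : Type*} [Fintype ι] [CommSemiring R]
    {P Q : Matrix ι ι R} (hP : P.IsSymm) (hQ : Q.IsSymm) (hPQ : P * Q = P) (hQP : Q * P = Q) :
    P = Q :=
  calc P = (P * Q)ᵀ := by rw [hPQ, hP.eq]
    _ = Q * P := by rw [transpose_mul, hP.eq, hQ.eq]
    _ = Q := hQP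

namespace IsMP

variable {k m n : ℕ} {A : Matrix (Fin m) (Fin n) ℝ} {X : Matrix (Fin n) (Fin m) ℝ}

lemma mul_mul_eq_of_range_le (hA : IsMP A X) {B : Matrix (Fin m) (Fin k) ℝ}
    (h : LinearMap.range B.mulVecLin ≤ LinearMap.range A.mulVecLin) : A * X * B = B := by
  refine Matrix.ext_iff_mulVec.2 fun v => ?_
  obtain ⟨w, hw⟩ := h ⟨v, rfl⟩
  rw [Matrix.mulVecLin_apply, Matrix.mulVecLin_apply] at hw
  rw [← Matrix.mulVec_mulVec, ← hw, Matrix.mulVec_mulVec, hA.1]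

lemma mul_mul_eq_of_ker_le (hA : IsMP A X) {B : Matrix (Fin k) (Fin n) ℝ}
    (h : LinearMap.ker A.mulVecLin ≤ LinearMap.ker B.mulVecLin) : B * X * A = B := by
  refine Matrix.ext_iff_mulVec.2 fun v => ?_
  have hker : v - (X * A) *ᵥ v ∈ LinearMap.ker A.mulVecLin := by
    rw [LinearMap.mem_ker, Matrix.mulVecLin_apply, Matrix.mulVec_sub, Matrix.mulVec_mulVec,
      ← Matrix.mul_assoc, hA.1, sub_self]
  have := h hker
  rw [LinearMap.mem_ker, Matrix.mulVecLin_apply, Matrix.mulVec_sub, Matrix.mulVec_mulVec,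
    sub_eq_zero, ← Matrix.mul_assoc] at this
  exact this.symm

lemma mul_eq_of_range_eq_s14 {B : Matrix (Fin m) (Fin k) ℝ} {Y : Matrix (Fin k) (Fin m) ℝ}
    (hA : IsMP A X) (hB : IsMP B Y)
    (h : LinearMap.range A.mulVecLin = LinearMap.range B.mulVecLin) : A * X = B * Y :=
  Matrix.eq_of_isSymm_of_mul_eq_right hA.2.2.1 hB.2.2.1
    (by rw [← Matrix.mul_assoc, hA.mul_mul_eq_of_range_le h.ge])
    (by rw [← Matrix.mul_assoc, hB.mul_mul_eq_of_range_le h.le])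

lemma pinv_mul_eq_of_ker_eq {B : Matrix (Fin k) (Fin n) ℝ} {Y : Matrix (Fin n) (Fin k) ℝ}
    (hA : IsMP A X) (hB : IsMP B Y)
    (h : LinearMap.ker A.mulVecLin = LinearMap.ker B.mulVecLin) : X * A = Y * B :=
  Matrix.eq_of_isSymm_of_mul_eq_left hA.2.2.2 hB.2.2.2
    (by rw [Matrix.mul_assoc X, ← Matrix.mul_assoc A, hB.mul_mul_eq_of_ker_le h.ge])
    (by rw [Matrix.mul_assoc Y, ← Matrix.mul_assoc B, hA.mul_mul_eq_of_ker_le h.le])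

end IsMP

namespace ProperSplitting

variable {m n : ℕ} {A U V : Matrix (Fin m) (Fin n) ℝ} {Ad Ud : Matrix (Fin n) (Fin m) ℝ}

lemma pinv_mul_mul_pinv (hs : ProperSplitting A U V) (hA : IsMP A Ad) (hU : IsMP U Ud) :
    Ud * V * Ad = Ad - Ud := by
  have hV : V = U - A := by rw [hs.1, sub_sub_cancel]
  have hUdU : Ud * U = Ad * A := hU.pinv_mul_eq_of_ker_eq hA hs.2.2
  have hUUd : U * Ud = A * Ad := hU.mul_eq_of_range_eq_s14 hA hs.2.1
  rw [hV, Matrix.mul_sub, Matrix.sub_mul, hUdU, Matrix.mul_assoc Ud, ← hUUd, ← Matrix.mul_assoc,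
    hA.2.1, hU.2.1]

end ProperSplitting

lemma multisplitting_mul_pinv {m n p : ℕ} {A : Matrix (Fin m) (Fin n) ℝ}
    {U V : Fin p → Matrix (Fin m) (Fin n) ℝ} {Ud : Fin p → Matrix (Fin n) (Fin m) ℝ}
    {E : Fin p → Matrix (Fin n) (Fin n) ℝ} {Ad : Matrix (Fin n) (Fin m) ℝ} (hA : IsMP A Ad)
    (hps : ∀ k, ProperSplitting A (U k) (V k)) (hU : ∀ k, IsMP (U k) (Ud k))
    (hEsum : ∑ k, E k = 1) :
    (∑ k, E k * Ud k * V k) * Ad = Ad - ∑ k, E k * Ud k := by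
  simp only [Matrix.sum_mul, Matrix.mul_assoc, (hps _).pinv_mul_mul_pinv hA (hU _), Matrix.mul_sub]
  rw [Finset.sum_sub_distrib, ← Matrix.sum_mul, hEsum, Matrix.one_mul]

lemma Matrix.sum_range_pow_mul_add_pow_mul {ι κ R : Type*} [Fintype ι] [DecidableEq ι] [Ring R]
    {H : Matrix ι ι R} {B G : Matrix ι κ R} (h : H * B = B - G) (N : ℕ) :
    ∑ j ∈ Finset.range N, H ^ j * G + H ^ N * B = B := by
  induction N with
  | zero => simp
  | succ N ih =>
    rw [Finset.sum_range_succ, pow_succ, Matrix.mul_assoc, h, Matrix.mul_sub, add_add_sub_cancel,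
      ih]

section Convergence

variable {m n : ℕ} {H : Matrix (Fin n) (Fin n) ℝ}

lemma tendsto_pow_mul_apply_of_mul_eq_sub {B G : Matrix (Fin n) (Fin m) ℝ} (hH : EntryNonneg H)
    (hB : EntryNonneg B) (hG : EntryNonneg G) (h : H * B = B - G) (i : Fin n) (j : Fin m) :
    Tendsto (fun N => (H ^ N * G : Matrix (Fin n) (Fin m) ℝ) i j) atTop (𝓝 0) := by
  refine (summable_of_sum_range_le (c := B i j) (fun N => (hH.pow N).mul hG i j)
    fun N => ?_).tendsto_atTop_zero
  have := congrFun₂ (Matrix.sum_range_pow_mul_add_pow_mul h N) i j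
  rw [Matrix.add_apply, Matrix.sum_apply] at this
  linarith [(hH.pow N).mul hB i j]

lemma tendsto_pow_apply_of_mul_eq_sub_sum {p : ℕ} {B : Matrix (Fin n) (Fin m) ℝ}
    {G : Fin p → Matrix (Fin n) (Fin m) ℝ} {W : Fin p → Matrix (Fin m) (Fin n) ℝ}
    (hHGW : H = ∑ k, G k * W k) (hH : EntryNonneg H) (hB : EntryNonneg B)
    (hG : ∀ k, EntryNonneg (G k)) (h : H * B = B - ∑ k, G k) (i j : Fin n) :
    Tendsto (fun N => (H ^ N) i j) atTop (𝓝 0) := by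
  have hGk : ∀ k i l,
      Tendsto (fun N => (H ^ N * G k : Matrix (Fin n) (Fin m) ℝ) i l) atTop (𝓝 0) := fun k i l =>
    tendsto_of_tendsto_of_tendsto_of_le_of_le tendsto_const_nhds
      (tendsto_pow_mul_apply_of_mul_eq_sub hH hB (EntryNonneg.sum fun k _ => hG k) h i l)
      (fun N => (hH.pow N).mul (hG k) i l) fun N => by
        simp only [Matrix.mul_sum, Matrix.sum_apply]
        exact Finset.single_le_sum (fun k _ => (hH.pow N).mul (hG k) i l) (Finset.mem_univ k)
  have hpow : ∀ N, H ^ (N + 1) = ∑ k, H ^ N * G k * W k := fun N => by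
    rw [pow_succ]
    nth_rw 2 [hHGW]
    simp only [Matrix.mul_sum, Matrix.mul_assoc]
  rw [← tendsto_add_atTop_iff_nat 1]
  simp only [hpow, Matrix.sum_apply, Matrix.mul_apply (M := H ^ _ * G _)]
  simpa using tendsto_finsetSum _ fun k _ => tendsto_finsetSum _ fun l _ =>
    (hGk k i l).mul_const (W k l j)

end Convergence

section SpectralRadius

variable {n : ℕ} {M : Matrix (Fin n) (Fin n) ℝ}

lemma finite_setOf_isEigen (M : Matrix (Fin n) (Fin n) ℝ) : {μ | IsEigen M μ}.Finite :=
  Polynomial.finite_setOfPred_isRoot (Matrix.charpoly_monic _).ne_zero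

lemma IsEigen.hasEigenvalue {μ : ℂ} (h : IsEigen M μ) :
    Module.End.HasEigenvalue (Matrix.toLin' (M.map (algebraMap ℝ ℂ))) μ := by
  rwa [Module.End.hasEigenvalue_iff_isRoot_charpoly, Matrix.charpoly_toLin']

lemma IsEigen.norm_lt_one_of_tendsto_pow {μ : ℂ} (h : IsEigen M μ)
    (hM : ∀ i j, Tendsto (fun N => (M ^ N) i j) atTop (𝓝 0)) : ‖μ‖ < 1 := by
  obtain ⟨v, hv⟩ := h.hasEigenvalue.exists_hasEigenvector
  obtain ⟨i, hvi⟩ := Function.ne_iff.1 hv.2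
  have hentry : ∀ N, μ ^ N * v i = ∑ l, ((M ^ N) i l : ℂ) * v l := fun N => by
    have := congrFun (hv.pow_apply N) i
    rw [← Matrix.toLin'_pow, Matrix.toLin'_apply, ← Matrix.map_pow] at this
    rw [← smul_eq_mul, ← Pi.smul_apply, ← this]
    rfl
  have hlim : Tendsto (fun N => μ ^ N * v i) atTop (𝓝 0) := by
    simp only [hentry]
    simpa using tendsto_finsetSum _ fun l _ =>
      ((Complex.continuous_ofReal.tendsto 0).comp (hM i l)).mul_const (v l)
  rw [← tendsto_pow_atTop_nhds_zero_iff_norm_lt_one]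
  simpa [mul_inv_cancel_right₀ hvi] using hlim.mul_const (v i)⁻¹

lemma specRad_lt_one_of_tendsto_pow
    (hM : ∀ i j, Tendsto (fun N => (M ^ N) i j) atTop (𝓝 0)) : specRad M < 1 := by
  rcases Set.eq_empty_or_nonempty {r : ℝ | ∃ μ : ℂ, IsEigen M μ ∧ r = ‖μ‖} with hS | hS
  · rw [specRad, hS, Real.sSup_empty]
    exact one_pos
  · have hfin : {r : ℝ | ∃ μ : ℂ, IsEigen M μ ∧ r = ‖μ‖}.Finite :=
      ((finite_setOf_isEigen M).image (‖·‖)).subset fun _ ⟨μ, hμ, hr⟩ => ⟨μ, hμ, hr.symm⟩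
    rw [specRad, hfin.csSup_lt_iff hS]
    rintro _ ⟨μ, hμ, rfl⟩
    exact hμ.norm_lt_one_of_tendsto_pow hM

end SpectralRadius

theorem stmt14_general {m n p : ℕ} (A : Matrix (Fin m) (Fin n) ℝ)
    (U V : Fin p → Matrix (Fin m) (Fin n) ℝ) (Ud : Fin p → Matrix (Fin n) (Fin m) ℝ)
    (E : Fin p → Matrix (Fin n) (Fin n) ℝ)
    (Ad : Matrix (Fin n) (Fin m) ℝ) (hA : IsMP A Ad) (hsemi : EntryNonneg Ad)
    (hps : ∀ k, ProperSplitting A (U k) (V k)) (hU : ∀ k, IsMP (U k) (Ud k))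
    (hE0 : ∀ k, EntryNonneg (E k))
    (hEsum : ∑ k, E k = 1)
    (hUd : ∀ k, EntryNonneg (Ud k)) (hUdV : ∀ k, EntryNonneg (Ud k * V k)) :
    specRad (∑ k, E k * Ud k * V k) < 1 := by
  have hH : EntryNonneg (∑ k, E k * Ud k * V k) := EntryNonneg.sum fun k _ => by
    rw [Matrix.mul_assoc]
    exact (hE0 k).mul (hUdV k)
  exact specRad_lt_one_of_tendsto_pow <| tendsto_pow_apply_of_mul_eq_sub_sum rfl hH hsemi
    (fun k => (hE0 k).mul (hUd k)) (multisplitting_mul_pinv hA hps hU hEsum)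

theorem stmt14 {m n p : ℕ} (A : Matrix (Fin m) (Fin n) ℝ)
    (U V : Fin p → Matrix (Fin m) (Fin n) ℝ) (Ud : Fin p → Matrix (Fin n) (Fin m) ℝ)
    (E : Fin p → Matrix (Fin n) (Fin n) ℝ)
    (Ad : Matrix (Fin n) (Fin m) ℝ) (hA : IsMP A Ad) (hsemi : EntryNonneg Ad)
    (hps : ∀ k, ProperSplitting A (U k) (V k)) (hU : ∀ k, IsMP (U k) (Ud k))
    (hE0 : ∀ k, EntryNonneg (E k)) (hEdiag : ∀ k, ∀ i j, i ≠ j → E k i j = 0)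
    (hEsum : ∑ k, E k = 1)
    (hUd : ∀ k, EntryNonneg (Ud k)) (hUdV : ∀ k, EntryNonneg (Ud k * V k)) :
    specRad (∑ k, E k * Ud k * V k) < 1 :=
  stmt14_general A U V Ud E Ad hA hsemi hps hU hE0 hEsum hUd hUdV
end
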